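/- Let γ=(γ1,γ2) be a weight, δ=γ1+γ2, let H be a quasi-homogeneous polynomial of generalized degree χ+δ (χ≥0), set 𝓗=(−∂H/∂x2, ∂H/∂x1), and let J be a quasi-homogeneous polynomial of g.d. k≥0. Then there exists a quasi-homogeneous polynomial K of g.d. k+χ+δ such that the Lie bracket satisfies [𝓗, J·E_γ] = (−∂K/∂x2, ∂K/∂x1) + ((k+δ)/(k+χ+δ))·𝓗(J)·E_γ. -/

import Mathlib

/-! Write `𝓙` for the Hamiltonian field of `J`. By the Leibniz rule and `[𝓗, E_γ] = −χ·𝓗` (Euler's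
identity applied to the components of `𝓗`), `[𝓗, J·E_γ] = −χ·J·𝓗 + 𝓗(J)·E_γ`. Cramer's rule in
the plane gives `𝓗(J)·E_γ = E_γ(J)·𝓗 − E_γ(H)·𝓙 = k·J·𝓗 − (χ+δ)·H·𝓙`, while `J·𝓗 + H·𝓙` is the
Hamiltonian field of `JH`. Everything is thus a linear combination of `J·𝓗` and `H·𝓙`, and
`K = −χ(χ+δ)/(k+χ+δ)·JH` matches the coefficients. -/

open MvPolynomial

/-- A planar polynomial vector field `P = (P1, P2)` applied to a polynomial `f`:
`P(f) = P1·∂f/∂x1 + P2·∂f/∂x2`. -/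
noncomputable def applyVF (P : MvPolynomial (Fin 2) ℝ × MvPolynomial (Fin 2) ℝ)
    (f : MvPolynomial (Fin 2) ℝ) : MvPolynomial (Fin 2) ℝ :=
  P.1 * pderiv 0 f + P.2 * pderiv 1 f

/-- The Lie bracket of two planar polynomial vector fields:
`[P,Q] = (P(Q1) − Q(P1), P(Q2) − Q(P2))`. -/
noncomputable def lieVF (P Q : MvPolynomial (Fin 2) ℝ × MvPolynomial (Fin 2) ℝ) :
    MvPolynomial (Fin 2) ℝ × MvPolynomial (Fin 2) ℝ :=
  (applyVF P Q.1 - applyVF Q P.1, applyVF P Q.2 - applyVF Q P.2)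

/-- The Euler vector field `E_γ = (γ1·x1, γ2·x2)`. -/
noncomputable def eulerVF (γ1 γ2 : ℕ) : MvPolynomial (Fin 2) ℝ × MvPolynomial (Fin 2) ℝ :=
  ((γ1 : ℝ) • X 0, (γ2 : ℝ) • X 1)

/-- The Hamiltonian vector field `(−∂H/∂x2, ∂H/∂x1)` of a polynomial `H`. -/
noncomputable def hamVF (H : MvPolynomial (Fin 2) ℝ) :
    MvPolynomial (Fin 2) ℝ × MvPolynomial (Fin 2) ℝ :=
  (-(pderiv 1 H), pderiv 0 H)

/-- Multiplication of a planar vector field by a scalar polynomial. -/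
noncomputable def smulVF (J : MvPolynomial (Fin 2) ℝ)
    (P : MvPolynomial (Fin 2) ℝ × MvPolynomial (Fin 2) ℝ) :
    MvPolynomial (Fin 2) ℝ × MvPolynomial (Fin 2) ℝ :=
  (J * P.1, J * P.2)

/-- The divergence `∂P1/∂x1 + ∂P2/∂x2` of a planar polynomial vector field. -/
noncomputable def divVF (P : MvPolynomial (Fin 2) ℝ × MvPolynomial (Fin 2) ℝ) :
    MvPolynomial (Fin 2) ℝ :=
  pderiv 0 P.1 + pderiv 1 P.2

/-- A vector quasi-homogeneous polynomial of generalized degree `χ` for the weight `(γ1, γ2)`. -/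
def IsWeightedHomogeneousVF (γ1 γ2 χ : ℕ)
    (P : MvPolynomial (Fin 2) ℝ × MvPolynomial (Fin 2) ℝ) : Prop :=
  P.1.IsWeightedHomogeneous ![γ1, γ2] (χ + γ1) ∧ P.2.IsWeightedHomogeneous ![γ1, γ2] (χ + γ2)

lemma smulVF_eq_smul (J : MvPolynomial (Fin 2) ℝ)
    (P : MvPolynomial (Fin 2) ℝ × MvPolynomial (Fin 2) ℝ) : smulVF J P = J • P :=
  rfl

lemma applyVF_eulerVF {γ1 γ2 n : ℕ} {f : MvPolynomial (Fin 2) ℝ}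
    (hf : f.IsWeightedHomogeneous ![γ1, γ2] n) :
    applyVF (eulerVF γ1 γ2) f = (n : ℝ) • f := by
  have euler := hf.sum_weight_X_mul_pderiv
  simp only [Fin.sum_univ_two, Matrix.cons_val_zero, Matrix.cons_val_one,
    ← Nat.cast_smul_eq_nsmul ℝ] at euler
  simpa only [applyVF, eulerVF, smul_mul_assoc] using euler

lemma lieVF_eulerVF {γ1 γ2 χ : ℕ} {P : MvPolynomial (Fin 2) ℝ × MvPolynomial (Fin 2) ℝ}
    (hP : IsWeightedHomogeneousVF γ1 γ2 χ P) :
    lieVF P (eulerVF γ1 γ2) = -(χ : ℝ) • P := by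
  rw [lieVF, applyVF_eulerVF hP.1, applyVF_eulerVF hP.2]
  refine Prod.ext ?_ ?_ <;>
    simp only [applyVF, eulerVF, Prod.smul_fst, Prod.smul_snd, smul_eq_C_mul, pderiv_C_mul,
      pderiv_X_self, pderiv_X_of_ne Fin.zero_ne_one, pderiv_X_of_ne Fin.zero_ne_one.symm] <;>
    simp only [Nat.cast_add, map_add, map_neg, map_natCast] <;> ring

lemma isWeightedHomogeneousVF_hamVF {γ1 γ2 χ : ℕ} {H : MvPolynomial (Fin 2) ℝ}
    (hH : H.IsWeightedHomogeneous ![γ1, γ2] (χ + (γ1 + γ2))) :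
    IsWeightedHomogeneousVF γ1 γ2 χ (hamVF H) :=
  ⟨(hH.pderiv (i := 1) (by simp; ring)).neg, hH.pderiv (i := 0) (by simp; ring)⟩

lemma lieVF_smulVF_right (J : MvPolynomial (Fin 2) ℝ)
    (P Q : MvPolynomial (Fin 2) ℝ × MvPolynomial (Fin 2) ℝ) :
    lieVF P (smulVF J Q) = smulVF J (lieVF P Q) + smulVF (applyVF P J) Q := by
  refine Prod.ext ?_ ?_ <;>
    simp only [lieVF, applyVF, smulVF, Prod.fst_add, Prod.snd_add, pderiv_mul] <;> ring

lemma hamVF_mul (f g : MvPolynomial (Fin 2) ℝ) :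
    hamVF (f * g) = smulVF f (hamVF g) + smulVF g (hamVF f) := by
  refine Prod.ext ?_ ?_ <;>
    simp only [hamVF, smulVF, Prod.fst_add, Prod.snd_add, pderiv_mul] <;> ring

lemma hamVF_C_mul (r : ℝ) (f : MvPolynomial (Fin 2) ℝ) : hamVF (C r * f) = r • hamVF f := by
  simp [hamVF, smul_eq_C_mul]

lemma smulVF_applyVF_hamVF (H J : MvPolynomial (Fin 2) ℝ)
    (P : MvPolynomial (Fin 2) ℝ × MvPolynomial (Fin 2) ℝ) :
    smulVF (applyVF (hamVF H) J) P =
      smulVF (applyVF P J) (hamVF H) - smulVF (applyVF P H) (hamVF J) := by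
  refine Prod.ext ?_ ?_ <;>
    simp only [applyVF, hamVF, smulVF, Prod.fst_sub, Prod.snd_sub] <;> ring

theorem lie_ham_smul_euler_general (γ1 γ2 : ℕ) (hγ1 : 0 < γ1) (χ k : ℕ)
    (H : MvPolynomial (Fin 2) ℝ)
    (hH : H.IsWeightedHomogeneous ![γ1, γ2] (χ + (γ1 + γ2)))
    (J : MvPolynomial (Fin 2) ℝ) (hJ : J.IsWeightedHomogeneous ![γ1, γ2] k) :
    ∃ K : MvPolynomial (Fin 2) ℝ,
      K.IsWeightedHomogeneous ![γ1, γ2] (k + χ + (γ1 + γ2)) ∧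
      lieVF (hamVF H) (smulVF J (eulerVF γ1 γ2)) =
        hamVF K + (((k + (γ1 + γ2) : ℕ) : ℝ) / ((k + χ + (γ1 + γ2) : ℕ) : ℝ)) •
          smulVF (applyVF (hamVF H) J) (eulerVF γ1 γ2) := by
  have hbracket : lieVF (hamVF H) (smulVF J (eulerVF γ1 γ2)) =
      -(χ : ℝ) • smulVF J (hamVF H) + smulVF (applyVF (hamVF H) J) (eulerVF γ1 γ2) := by
    rw [lieVF_smulVF_right, lieVF_eulerVF (isWeightedHomogeneousVF_hamVF hH)]
    simp only [smulVF_eq_smul, smul_comm J]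
  have hplanar : smulVF (applyVF (hamVF H) J) (eulerVF γ1 γ2) =
      (k : ℝ) • smulVF J (hamVF H) - ((χ + (γ1 + γ2) : ℕ) : ℝ) • smulVF H (hamVF J) := by
    rw [smulVF_applyVF_hamVF, applyVF_eulerVF hJ, applyVF_eulerVF hH]
    simp only [smulVF_eq_smul, smul_assoc]
  have hm : ((k + χ + (γ1 + γ2) : ℕ) : ℝ) ≠ 0 := Nat.cast_ne_zero.2 (by omega)
  refine ⟨C (-(χ * (χ + (γ1 + γ2)) : ℝ) / (k + χ + (γ1 + γ2))) * (J * H), ?_, ?_⟩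
  · rw [Nat.add_assoc k χ]
    exact (hJ.mul hH).C_mul _
  · rw [hbracket, hplanar, hamVF_C_mul, hamVF_mul]
    push_cast at hm ⊢
    match_scalars <;> field_simp <;> ring

/-- **Lemma 2, part 1.** Let `γ=(γ1,γ2)` be a weight, `δ=γ1+γ2`, `H` a
quasi-homogeneous polynomial of g.d. `χ+δ` (`χ ≥ 0`), `𝓗 = (−∂H/∂x2, ∂H/∂x1)`, and `J` a
quasi-homogeneous polynomial of g.d. `k ≥ 0`. Then there is a quasi-homogeneous polynomial `K`
of g.d. `k+χ+δ` with `[𝓗, J·E_γ] = (−∂K/∂x2, ∂K/∂x1) + ((k+δ)/(k+χ+δ))·𝓗(J)·E_γ`. -/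
theorem lie_ham_smul_euler (γ1 γ2 : ℕ) (hγ1 : 0 < γ1) (hγ2 : 0 < γ2)
    (hcop : Nat.Coprime γ1 γ2) (χ k : ℕ)
    (H : MvPolynomial (Fin 2) ℝ)
    (hH : H.IsWeightedHomogeneous ![γ1, γ2] (χ + (γ1 + γ2)))
    (J : MvPolynomial (Fin 2) ℝ) (hJ : J.IsWeightedHomogeneous ![γ1, γ2] k) :
    ∃ K : MvPolynomial (Fin 2) ℝ,
      K.IsWeightedHomogeneous ![γ1, γ2] (k + χ + (γ1 + γ2)) ∧
      lieVF (hamVF H) (smulVF J (eulerVF γ1 γ2)) =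
        hamVF K + (((k + (γ1 + γ2) : ℕ) : ℝ) / ((k + χ + (γ1 + γ2) : ℕ) : ℝ)) •
          smulVF (applyVF (hamVF H) J) (eulerVF γ1 γ2) :=
  lie_ham_smul_euler_general γ1 γ2 hγ1 χ k H hH J hJ
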